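/- Let n be a positive integer. There does not exist a closed subset Σ ⊂ (ℝ^{n+1})^{2n+1} of Lebesgue measure zero such that for every p = (p₀,…,p_{2n}) ∈ (ℝ^{n+1})^{2n+1} − Σ and every (2n+1)×(n+1) matrix A with non-zero entries the following two properties both hold: (1) if the rank of A is n+1, then G_{(p,A)} is A-equivalent to the normal form of Whitney umbrella (x₀,x₁,…,xₙ) ↦ (x₀², x₀x₁, …, x₀xₙ, x₁, …, xₙ); and (2) if the rank of A is less than n+1, then G_{(p,A)} is A-equivalent to the inclusion (x₀,…,xₙ) ↦ (x₀,…,xₙ, 0, …, 0). -/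

import Mathlib

/-- A `C^∞` diffeomorphism of a normed space onto itself. -/
def IsSmoothDiffeo {E : Type*} [NormedAddCommGroup E] [NormedSpace ℝ E] (φ : E → E) : Prop :=
  ContDiff ℝ (⊤ : ℕ∞) φ ∧
    ∃ φi : E → E, ContDiff ℝ (⊤ : ℕ∞) φi ∧ (∀ x, φi (φ x) = x) ∧ (∀ y, φ (φi y) = y)

/-- `f` and `g` are `𝒜`-equivalent: `ψ ∘ f ∘ φ = g` for some `C^∞` diffeomorphisms
`φ` of the source and `ψ` of the target. -/
def AEquiv {E F : Type*} [NormedAddCommGroup E] [NormedSpace ℝ E]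
    [NormedAddCommGroup F] [NormedSpace ℝ F] (f g : E → F) : Prop :=
  ∃ (φ : E → E) (ψ : F → F), IsSmoothDiffeo φ ∧ IsSmoothDiffeo ψ ∧ ψ ∘ f ∘ φ = g

/-- The generalized distance-squared mapping
`G_{(p,A)} : ℝ^{n+1} → ℝ^{2n+1}` for `p = (p₀,…,p_{2n})`. -/
def genDistSqMap {n : ℕ} (p : Fin (2 * n + 1) → (Fin (n + 1) → ℝ))
    (A : Matrix (Fin (2 * n + 1)) (Fin (n + 1)) ℝ) (x : Fin (n + 1) → ℝ) :
    Fin (2 * n + 1) → ℝ :=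
  fun i => ∑ j, A i j * (x j - p i j) ^ 2

/-- The normal form of Whitney umbrella
`(x₀,…,xₙ) ↦ (x₀², x₀x₁, …, x₀xₙ, x₁, …, xₙ)`. -/
def whitneyUmbrella (n : ℕ) (x : Fin (n + 1) → ℝ) : Fin (2 * n + 1) → ℝ :=
  fun i =>
    if h : (i : ℕ) ≤ n then x 0 * x ⟨(i : ℕ), by omega⟩
    else x ⟨(i : ℕ) - n, by have := i.isLt; omega⟩

/-- The inclusion `(x₀,…,xₙ) ↦ (x₀,…,xₙ,0,…,0)` of `ℝ^{n+1}` into `ℝ^{2n+1}`. -/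
def inclusionMap (n : ℕ) (x : Fin (n + 1) → ℝ) : Fin (2 * n + 1) → ℝ :=
  fun i => if h : (i : ℕ) < n + 1 then x ⟨(i : ℕ), h⟩ else 0

/-!
Only two set-theoretic invariants of `𝒜`-equivalence are needed: injectivity, and having a
triple point (three distinct points with one image). The inclusion is injective; the Whitney
umbrella is not, but its fibres have at most two points (`x` and `x` with `x₀` negated).

For `n ≥ 2`, the matrix `aᵢⱼ = (2c + 1 - 2pᵢⱼ)⁻¹` gives `G(c𝟙 + eⱼ) = G(c𝟙) + 𝟙` for every `j`,
a triple point, whatever the rank of `A`. For `n = 1` there are only two `eⱼ`, and we split on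
whether the three centres are collinear: if they are, the all-ones matrix (rank one) makes `G`
invariant under the reflection in their line; if not, the rank-two matrix with rows
`(1, pᵢ₀ + r)` makes `G` injective for all but finitely many `r`.
-/

open Function Matrix

namespace IsSmoothDiffeo

variable {E : Type*} [NormedAddCommGroup E] [NormedSpace ℝ E] {φ : E → E}

theorem injective (h : IsSmoothDiffeo φ) : Injective φ :=
  let ⟨_, _, _, hleft, _⟩ := h
  LeftInverse.injective hleft

theorem surjective (h : IsSmoothDiffeo φ) : Surjective φ :=
  let ⟨_, _, _, _, hright⟩ := h
  LeftInverse.surjective hright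

end IsSmoothDiffeo

def HasTriplePoint {α β : Type*} (f : α → β) : Prop :=
  ∃ x : Fin 3 → α, Injective x ∧ ∀ k l, f (x k) = f (x l)

theorem Function.Injective.not_hasTriplePoint {α β : Type*} {f : α → β} (hf : Injective f) :
    ¬ HasTriplePoint f := fun ⟨_, hx, hfx⟩ =>
  zero_ne_one (hx (hf (hfx 0 1)))

namespace AEquiv

variable {E F : Type*} [NormedAddCommGroup E] [NormedSpace ℝ E]
    [NormedAddCommGroup F] [NormedSpace ℝ F] {f g : E → F}

theorem symm (h : AEquiv f g) : AEquiv g f := by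
  obtain ⟨φ, ψ, ⟨hφ, φi, hφi, hφl, hφr⟩, ⟨hψ, ψi, hψi, hψl, hψr⟩, rfl⟩ := h
  refine ⟨φi, ψi, ⟨hφi, φ, hφ, hφr, hφl⟩, ⟨hψi, ψ, hψ, hψr, hψl⟩, ?_⟩
  funext x
  simp [hφr x, hψl]

theorem injective (h : AEquiv f g) (hf : Injective f) : Injective g := by
  obtain ⟨φ, ψ, hφ, hψ, rfl⟩ := h
  exact hψ.injective.comp (hf.comp hφ.injective)

theorem hasTriplePoint (h : AEquiv f g) (hf : HasTriplePoint f) : HasTriplePoint g := by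
  obtain ⟨φ, ψ, hφ, -, rfl⟩ := h
  obtain ⟨x, hx, hfx⟩ := hf
  refine ⟨surjInv hφ.surjective ∘ x, (injective_surjInv _).comp hx, fun k l => ?_⟩
  simp [surjInv_eq hφ.surjective, hfx k l]

end AEquiv

theorem inclusionMap_apply_castLE {n : ℕ} (x : Fin (n + 1) → ℝ) (k : Fin (n + 1)) :
    inclusionMap n x (Fin.castLE (by omega) k) = x k := by
  simp [inclusionMap, Nat.not_lt.mpr (Fin.is_le k)]

theorem inclusionMap_injective (n : ℕ) : Injective (inclusionMap n) := fun x y h =>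
  funext fun k => by
    simpa only [inclusionMap_apply_castLE] using congrFun h (Fin.castLE (by omega) k)

section whitneyUmbrella

variable {n : ℕ} {x y : Fin (n + 1) → ℝ}

theorem whitneyUmbrella_apply_zero (x : Fin (n + 1) → ℝ) : whitneyUmbrella n x 0 = x 0 * x 0 := by
  simp [whitneyUmbrella]

theorem whitneyUmbrella_apply_add {k : Fin (n + 1)} (hk : k ≠ 0) (x : Fin (n + 1) → ℝ) :
    whitneyUmbrella n x ⟨n + k, by omega⟩ = x k := by
  have : (k : ℕ) ≠ 0 := Fin.val_ne_zero_iff.mpr hk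
  simp [whitneyUmbrella, show ¬ n + (k : ℕ) ≤ n by omega]

theorem eq_of_whitneyUmbrella_eq (h : whitneyUmbrella n x = whitneyUmbrella n y)
    (h0 : x 0 = y 0) : x = y := by
  funext k
  obtain rfl | hk := eq_or_ne k 0
  · exact h0
  · simpa only [whitneyUmbrella_apply_add hk] using congrFun h ⟨n + k, by omega⟩

theorem apply_zero_eq_or_eq_neg_of_whitneyUmbrella_eq
    (h : whitneyUmbrella n x = whitneyUmbrella n y) : x 0 = y 0 ∨ x 0 = -y 0 :=
  mul_self_eq_mul_self_iff.mp (by simpa only [whitneyUmbrella_apply_zero] using congrFun h 0)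

theorem whitneyUmbrella_not_injective (n : ℕ) : ¬ Injective (whitneyUmbrella n) := by
  have key : whitneyUmbrella n (Pi.single 0 1) = whitneyUmbrella n (Pi.single 0 (-1)) := by
    funext i
    simp only [whitneyUmbrella]
    split_ifs with hi
    · simp [Pi.single_apply]
    · simp [show (i : ℕ) - n ≠ 0 by omega]
  intro h
  have := congrFun (h key) 0
  norm_num at this

theorem whitneyUmbrella_not_hasTriplePoint (n : ℕ) : ¬ HasTriplePoint (whitneyUmbrella n) := by
  rintro ⟨x, hx, hfx⟩
  have hne : ∀ k, k ≠ 0 → x k 0 = - x 0 0 := fun k hk =>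
    ((apply_zero_eq_or_eq_neg_of_whitneyUmbrella_eq (hfx k 0)).resolve_left
      fun h0 => hk (hx (eq_of_whitneyUmbrella_eq (hfx k 0) h0)))
  have h12 : x 1 = x 2 :=
    eq_of_whitneyUmbrella_eq (hfx 1 2) ((hne 1 (by decide)).trans (hne 2 (by decide)).symm)
  exact absurd (hx h12) (by decide)

end whitneyUmbrella

theorem Matrix.rank_eq_card_width_of_mulVec_eq_zero {K m n : Type*} [Field K] [Fintype m]
    [Fintype n] {A : Matrix m n K} (h : ∀ v, A *ᵥ v = 0 → v = 0) :
    A.rank = Fintype.card n := by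
  rw [Matrix.rank, LinearMap.finrank_range_of_inj ((injective_iff_map_eq_zero _).2 h),
    Module.finrank_fintype_fun_eq_card]

section genDistSqMap

variable {n : ℕ} (p : Fin (2 * n + 1) → Fin (n + 1) → ℝ)
    (A : Matrix (Fin (2 * n + 1)) (Fin (n + 1)) ℝ)

theorem genDistSqMap_apply_sub_apply (x y : Fin (n + 1) → ℝ) (i : Fin (2 * n + 1)) :
    genDistSqMap p A x i - genDistSqMap p A y i =
      ∑ j, A i j * ((x j - y j) * (x j + y j - 2 * p i j)) := by
  simp only [genDistSqMap, ← Finset.sum_sub_distrib]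
  exact Finset.sum_congr rfl fun j _ => by ring

theorem genDistSqMap_update_apply (c : ℝ) (j : Fin (n + 1)) (i : Fin (2 * n + 1)) :
    genDistSqMap p A (update (fun _ => c) j (c + 1)) i =
      genDistSqMap p A (fun _ => c) i + A i j * (2 * c + 1 - 2 * p i j) := by
  rw [← sub_eq_iff_eq_add', genDistSqMap_apply_sub_apply,
    Fintype.sum_eq_single j fun k hk => by simp [update_of_ne hk]]
  simp only [update_self]
  ring

end genDistSqMap

theorem exists_hasTriplePoint_genDistSqMap {n : ℕ} (hn : 2 ≤ n)
    (p : Fin (2 * n + 1) → Fin (n + 1) → ℝ) :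
    ∃ A : Matrix (Fin (2 * n + 1)) (Fin (n + 1)) ℝ,
      (∀ i j, A i j ≠ 0) ∧ HasTriplePoint (genDistSqMap p A) := by
  obtain ⟨c, hcp⟩ := Infinite.exists_notMem_finset
    (Finset.univ.image fun ij : Fin (2 * n + 1) × Fin (n + 1) => p ij.1 ij.2 - 1 / 2)
  have hc : ∀ i j, 2 * c + 1 - 2 * p i j ≠ 0 := fun i j h =>
    hcp (Finset.mem_image.2 ⟨(i, j), Finset.mem_univ _, by linarith⟩)
  refine ⟨Matrix.of fun i j => (2 * c + 1 - 2 * p i j)⁻¹, fun i j => inv_ne_zero (hc i j),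
    fun k => update (fun _ => c) (Fin.castLE (by omega) k) (c + 1), fun k l hkl => ?_,
    fun k l => funext fun i => ?_⟩
  · have := congrFun hkl (Fin.castLE (by omega) k)
    simp only [update_self, update_apply, (Fin.castLE_injective _).eq_iff] at this
    split_ifs at this with h
    · exact h
    · linarith
  · simp [genDistSqMap_update_apply, hc]

/-- Its determinant vanishes iff the three points `pᵢ` are collinear. -/
def homogeneousCoordMatrix (p : Fin 3 → Fin 2 → ℝ) : Matrix (Fin 3) (Fin 3) ℝ :=
  Matrix.of fun i => ![1, p i 0, p i 1]

theorem exists_rank_lt_two_not_injective_genDistSqMap (p : Fin 3 → Fin 2 → ℝ)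
    (hp : (homogeneousCoordMatrix p).det = 0) :
    ∃ A : Matrix (Fin 3) (Fin 2) ℝ,
      (∀ i j, A i j ≠ 0) ∧ A.rank < 2 ∧ ¬ Injective (genDistSqMap (n := 1) p A) := by
  obtain ⟨v, hv0, hv⟩ := Matrix.exists_mulVec_eq_zero_iff.2 hp
  have hline : ∀ i, v 0 + p i 0 * v 1 + p i 1 * v 2 = 0 := fun i => by
    simpa [homogeneousCoordMatrix, Matrix.mulVec, dotProduct, Fin.sum_univ_three]
      using congrFun hv i
  have hw : v 1 ^ 2 + v 2 ^ 2 ≠ 0 := by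
    intro h
    have h1 : v 1 = 0 := by nlinarith
    have h2 : v 2 = 0 := by nlinarith
    have h0 : v 0 = 0 := by simpa [h1, h2] using hline 0
    exact hv0 (funext fun k => by fin_cases k <;> simp [h0, h1, h2])
  obtain ⟨t, ht⟩ : ∃ t, t * (v 1 ^ 2 + v 2 ^ 2) = -v 0 := ⟨_, div_mul_cancel₀ _ hw⟩
  -- `(t ± 1/2) • (v₁, v₂)` are mirror images in the line `v₀ + v₁X + v₂Y = 0` through the `pᵢ`
  refine ⟨Matrix.vecMulVec 1 1, by simp [Matrix.vecMulVec_apply],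
    (Matrix.rank_vecMulVec_le _ _).trans_lt one_lt_two, fun h => hw ?_⟩
  have := @h ((t + 1 / 2) • ![v 1, v 2]) ((t - 1 / 2) • ![v 1, v 2]) (funext fun i => by
    rw [← sub_eq_zero, genDistSqMap_apply_sub_apply]
    simp [Fin.sum_univ_two, Matrix.vecMulVec_apply]
    linear_combination 2 * ht - 2 * hline i)
  have h1 : (t + 1 / 2) * v 1 = (t - 1 / 2) * v 1 := congrFun this 0
  have h2 : (t + 1 / 2) * v 2 = (t - 1 / 2) * v 2 := congrFun this 1
  linear_combination v 1 * h1 + v 2 * h2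

theorem exists_rank_eq_two_injective_genDistSqMap (p : Fin 3 → Fin 2 → ℝ)
    (hp : (homogeneousCoordMatrix p).det ≠ 0) :
    ∃ A : Matrix (Fin 3) (Fin 2) ℝ,
      (∀ i j, A i j ≠ 0) ∧ A.rank = 2 ∧ Injective (genDistSqMap (n := 1) p A) := by
  set D := (homogeneousCoordMatrix p).det
  set E := (Matrix.of fun i => ![1, p i 0, p i 0 * p i 1]).det
  obtain ⟨r, hr⟩ := Infinite.exists_notMem_finset
    (insert (-E / D) (Finset.univ.image fun i => -p i 0))
  simp only [Finset.mem_insert, Finset.mem_image, Finset.mem_univ, true_and, not_or,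
    not_exists] at hr
  set M : Matrix (Fin 3) (Fin 3) ℝ := Matrix.of fun i => ![1, p i 0, (p i 0 + r) * p i 1]
  have hM : M.det ≠ 0 := by
    have hdet : M.det = E + r * D := by
      simp [M, E, D, homogeneousCoordMatrix, Matrix.det_fin_three]
      ring
    rw [hdet]
    intro h
    exact hr.1 (by field_simp; linarith)
  set A : Matrix (Fin 3) (Fin 2) ℝ := Matrix.of fun i => ![1, p i 0 + r]
  refine ⟨A, fun i j => ?_, ?_, fun x y hxy => ?_⟩
  · fin_cases j
    · simp [A]
    · simpa [A, add_eq_zero_iff_neg_eq] using hr.2 i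
  · refine Matrix.rank_eq_card_width_of_mulVec_eq_zero fun v hv => ?_
    have hw := eq_zero_of_mulVec_eq_zero hM (v := ![v 0 + r * v 1, v 1, 0]) <| funext fun i => by
      have := congrFun hv i
      simp [M, A, Matrix.mulVec, dotProduct, Fin.sum_univ_succ] at this ⊢
      linear_combination this
    have hv1 : v 1 = 0 := by simpa using congrFun hw 1
    have hv0 : v 0 = 0 := by simpa [hv1] using congrFun hw 0
    funext j
    fin_cases j <;> simp [hv0, hv1]
  · -- with `d = x - y` and `s = x + y`, row `i` of `G x = G y` reads
    -- `d₀(s₀ - 2pᵢ₀) + (pᵢ₀ + r) d₁(s₁ - 2pᵢ₁) = 0`, i.e. `M` kills the vector below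
    have hw := eq_zero_of_mulVec_eq_zero hM
      (v := ![(x 0 - y 0) * (x 0 + y 0) + r * ((x 1 - y 1) * (x 1 + y 1)),
        (x 1 - y 1) * (x 1 + y 1) - 2 * (x 0 - y 0), -2 * (x 1 - y 1)]) (funext fun i => by
      have := genDistSqMap_apply_sub_apply p A x y i
      rw [hxy, sub_self] at this
      simp [M, A, Matrix.mulVec, dotProduct, Fin.sum_univ_succ] at this ⊢
      linear_combination -this)
    have h1 : x 1 = y 1 := by simpa [sub_eq_zero] using congrFun hw 2
    have h0 : x 0 = y 0 := by simpa [h1, sub_eq_zero] using congrFun hw 1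
    funext j
    fin_cases j <;> simp [h0, h1]

/-- there is no universal closed Lebesgue-null set `Z ⊂ (ℝ^{n+1})^{2n+1}`
such that for every `p` outside `Z` and every `(2n+1)×(n+1)` matrix `A` with non-zero
entries, `G_{(p,A)}` is `𝒜`-equivalent to the normal form of Whitney umbrella whenever
`rank A = n+1`, and to the inclusion whenever `rank A < n+1`. -/
theorem no_universal_bad_set (n : ℕ) (hn : 1 ≤ n) :
    ¬ ∃ Z : Set (Fin (2 * n + 1) → (Fin (n + 1) → ℝ)),
        IsClosed Z ∧ MeasureTheory.volume Z = 0 ∧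
        ∀ p ∉ Z, ∀ A : Matrix (Fin (2 * n + 1)) (Fin (n + 1)) ℝ, (∀ i j, A i j ≠ 0) →
          (A.rank = n + 1 → AEquiv (genDistSqMap p A) (whitneyUmbrella n)) ∧
          (A.rank < n + 1 → AEquiv (genDistSqMap p A) (inclusionMap n)) := by
  rintro ⟨Z, -, hZ, hZp⟩
  obtain ⟨p, hp⟩ := (MeasureTheory.measure_eq_zero_iff_ae_notMem.1 hZ).exists
  obtain rfl | hn := hn.eq_or_lt
  · by_cases hcol : (homogeneousCoordMatrix p).det = 0
    · obtain ⟨A, hA, hrank, hG⟩ := exists_rank_lt_two_not_injective_genDistSqMap p hcol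
      exact hG (((hZp p hp A hA).2 hrank).symm.injective (inclusionMap_injective 1))
    · obtain ⟨A, hA, hrank, hG⟩ := exists_rank_eq_two_injective_genDistSqMap p hcol
      exact whitneyUmbrella_not_injective 1 (((hZp p hp A hA).1 hrank).injective hG)
  · obtain ⟨A, hA, hG⟩ := exists_hasTriplePoint_genDistSqMap hn p
    obtain hrank | hrank := A.rank_le_width.lt_or_eq
    · exact (inclusionMap_injective n).not_hasTriplePoint
        (((hZp p hp A hA).2 hrank).hasTriplePoint hG)
    · exact whitneyUmbrella_not_hasTriplePoint n (((hZp p hp A hA).1 hrank).hasTriplePoint hG)
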